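/- arXiv:2301.12960 — 2 statements merged into one kernel-verified Lean document; each statement's English description precedes it below -/
import Mathlib

section
/- Let H̃ be a Hermitian n×n matrix with n distinct eigenvalues λ_1,...,λ_n and unitary diagonalization H̃ = X diag(λ) X†. Then for every i, j, k: X_{ik} X*_{jk} = (Σ_{p=0}^{n-1} (-1)^p (H̃^p)_{ij} c_{n-1-p,k}) / Z_k, where Z_k = Π_{p≠k} (λ_p − λ_k) and c_{p,k} is the elementary symmetric polynomial of degree p in the eigenvalues {λ_q : q ≠ k} (with c_{0,k} = 1). -/
/-!
Write `f(x) = ∏_{q ≠ k} (λ_q - x)`. Expanding the product, the numerator of the right-hand side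
is the `(i, j)` entry of `f(H̃) = X diag(f(λ)) X†`, i.e. `∑_m X_{im} f(λ_m) X*_{jm}`. Since the
eigenvalues are distinct, `f(λ_m)` vanishes for `m ≠ k`, and `f(λ_k) = Z_k`.
-/

open Matrix Finset

theorem Finset.prod_sub_eq_sum_pow_mul_sum_powersetCard {ι R : Type*} [CommRing R]
    (s : Finset ι) (a : ι → R) (x : R) :
    ∏ q ∈ s, (a q - x) =
      ∑ p ∈ range (#s + 1), (-1) ^ p * x ^ p * ∑ t ∈ powersetCard (#s - p) s, ∏ q ∈ t, a q := by
  classical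
  have hsubsets : ∏ q ∈ s, (a q - x) = ∑ t ∈ s.powerset, (∏ q ∈ t, a q) * (-x) ^ (#s - #t) := by
    simp_rw [sub_eq_add_neg, prod_add]
    refine sum_congr rfl fun t ht => ?_
    rw [prod_const, card_sdiff_of_subset (mem_powerset.mp ht)]
  rw [hsubsets, sum_powerset, ← sum_range_reflect]
  refine sum_congr rfl fun p hp => ?_
  have hp : p ≤ #s := Nat.lt_succ_iff.mp (mem_range.mp hp)
  rw [show #s + 1 - 1 - p = #s - p by omega, mul_sum]
  refine sum_congr rfl fun t ht => ?_
  rw [(mem_powersetCard.mp ht).2, show #s - (#s - p) = p by omega, neg_pow]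
  ring

namespace Matrix

variable {m R : Type*} [Fintype m] [DecidableEq m] [CommRing R] [StarRing R]

theorem mul_diagonal_mul_conjTranspose_pow (U : Matrix m m R) (hU₁ : U * Uᴴ = 1)
    (hU₂ : Uᴴ * U = 1) (d : m → R) (p : ℕ) :
    (U * diagonal d * Uᴴ) ^ p = U * diagonal (d ^ p) * Uᴴ := by
  simpa [diagonal_pow] using Units.conj_pow ⟨U, Uᴴ, hU₁, hU₂⟩ (diagonal d) p

theorem mul_diagonal_mul_conjTranspose_apply (U : Matrix m m R) (d : m → R) (i j : m) :
    (U * diagonal d * Uᴴ) i j = ∑ l, U i l * d l * star (U j l) := by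
  rw [mul_apply]
  simp only [mul_diagonal, conjTranspose_apply]

theorem sum_mul_mul_diagonal_mul_conjTranspose_pow_apply (U : Matrix m m R) (hU₁ : U * Uᴴ = 1)
    (hU₂ : Uᴴ * U = 1) (d : m → R) (w : ℕ → R) (S : Finset ℕ) (i j : m) :
    ∑ p ∈ S, w p * ((U * diagonal d * Uᴴ) ^ p) i j =
      ∑ l, U i l * star (U j l) * ∑ p ∈ S, w p * d l ^ p := by
  simp only [mul_diagonal_mul_conjTranspose_pow U hU₁ hU₂, mul_diagonal_mul_conjTranspose_apply,
    mul_sum]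
  rw [sum_comm]
  refine sum_congr rfl fun l _ => sum_congr rfl fun p _ => ?_
  rw [Pi.pow_apply]
  ring

end Matrix

theorem stmt_7_general {n : ℕ} (Htilde : Matrix (Fin n) (Fin n) ℂ)
    (lam : Fin n → ℝ) (hdist : Function.Injective lam)
    (X : Matrix (Fin n) (Fin n) ℂ) (hX1 : X * Xᴴ = 1) (hX2 : Xᴴ * X = 1)
    (hdiag : Htilde = X * Matrix.diagonal (fun i => (lam i : ℂ)) * Xᴴ)
    (i j k : Fin n) :
    X i k * (starRingEnd ℂ) (X j k) =
      (∑ p ∈ Finset.range n, (-1 : ℂ) ^ p * (Htilde ^ p) i j *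
        ((∑ s ∈ Finset.powersetCard (n - 1 - p) (Finset.univ.erase k),
            ∏ q ∈ s, lam q : ℝ) : ℂ)) /
      ((∏ p ∈ Finset.univ.erase k, (lam p - lam k) : ℝ) : ℂ) := by
  have hcard : #(univ.erase k) = n - 1 := by simp
  have hexpand : ∀ x : ℂ, ∏ q ∈ univ.erase k, ((lam q : ℂ) - x) =
      ∑ p ∈ range n, (-1) ^ p * x ^ p *
        ∑ t ∈ powersetCard (n - 1 - p) (univ.erase k), ∏ q ∈ t, (lam q : ℂ) := fun x => by
    rw [prod_sub_eq_sum_pow_mul_sum_powersetCard, hcard, Nat.sub_add_cancel k.pos]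
  have hZ : ∏ p ∈ univ.erase k, (lam p - lam k) ≠ 0 :=
    prod_ne_zero_iff.mpr fun p hp => sub_ne_zero.mpr (hdist.ne (mem_erase.mp hp).1)
  rw [eq_div_iff (by exact_mod_cast hZ)]
  push_cast
  symm
  calc ∑ p ∈ range n, (-1) ^ p * (Htilde ^ p) i j *
        ∑ t ∈ powersetCard (n - 1 - p) (univ.erase k), ∏ q ∈ t, (lam q : ℂ)
      = ∑ p ∈ range n, (-1) ^ p *
          (∑ t ∈ powersetCard (n - 1 - p) (univ.erase k), ∏ q ∈ t, (lam q : ℂ)) *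
          (Htilde ^ p) i j :=
        sum_congr rfl fun p _ => mul_right_comm _ _ _
    _ = ∑ l, X i l * star (X j l) * ∏ q ∈ univ.erase k, ((lam q : ℂ) - lam l) := by
        rw [hdiag, sum_mul_mul_diagonal_mul_conjTranspose_pow_apply X hX1 hX2]
        refine sum_congr rfl fun l _ => ?_
        rw [hexpand]
        exact congrArg _ (sum_congr rfl fun p _ => by ring)
    _ = X i k * star (X j k) * ∏ q ∈ univ.erase k, ((lam q : ℂ) - lam k) := by
        refine sum_eq_single_of_mem k (mem_univ k) fun l _ hl => mul_eq_zero_of_right _ ?_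
        exact prod_eq_zero (mem_erase.mpr ⟨hl, mem_univ l⟩) (sub_self _)

/-- Kimura–Takamura–Yokomakura-type formula: for a Hermitian matrix `H̃` with
pairwise distinct eigenvalues diagonalized by a unitary `X`,
`X_{ik} X*_{jk} = (Σ_{p=0}^{n-1} (-1)^p (H̃^p)_{ij} c_{n-1-p,k}) / Z_k`. -/
theorem stmt_7 {n : ℕ} (Htilde : Matrix (Fin n) (Fin n) ℂ) (hH : Htildeᴴ = Htilde)
    (lam : Fin n → ℝ) (hdist : Function.Injective lam)
    (X : Matrix (Fin n) (Fin n) ℂ) (hX1 : X * Xᴴ = 1) (hX2 : Xᴴ * X = 1)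
    (hdiag : Htilde = X * Matrix.diagonal (fun i => (lam i : ℂ)) * Xᴴ)
    (i j k : Fin n) :
    X i k * (starRingEnd ℂ) (X j k) =
      (∑ p ∈ Finset.range n, (-1 : ℂ) ^ p * (Htilde ^ p) i j *
        ((∑ s ∈ Finset.powersetCard (n - 1 - p) (Finset.univ.erase k),
            ∏ q ∈ s, lam q : ℝ) : ℂ)) /
      ((∏ p ∈ Finset.univ.erase k, (lam p - lam k) : ℝ) : ℂ) :=
  stmt_7_general Htilde lam hdist X hX1 hX2 hdiag i j k
end

section
/- For the two-state nonorthogonal system with Gram matrix N = [[1, N₁₂],[N₁₂*, 1]] and |N₁₂| < 1, the projected probability operators (p_α)_{{1,2}} = (1−|N₁₂|⁴)^{-1}[p_α + |N₁₂|² p_{¬α} − ((1+|N₁₂|²)/2){p_α, p_{¬α}}] satisfy (p₁)_{{1,2}} + (p₂)_{{1,2}} = I. -/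
/-!
Adding the two operators, the coefficients combine to `(1 + |N₁₂|²) / (1 - |N₁₂|⁴) = 1 / (1 - |N₁₂|²)`
in front of `p₁ + p₂ - {p₁, p₂}`, so the claim is the two-state completeness relation
`p₁ + p₂ - {p₁, p₂} = (1 - |N₁₂|²) I`. Since `|N₁₂| < 1`, the equality case of Cauchy–Schwarz makes
`v₁, v₂` a basis of the two-dimensional space, and on `v₁` one computes
`(p₁ + p₂ - p₁ p₂ - p₂ p₁) v₁ = v₁ + N̄₁₂ v₂ - |N₁₂|² v₁ - N̄₁₂ v₂ = (1 - |N₁₂|²) v₁`, symmetrically on `v₂`.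
-/

open scoped InnerProductSpace

section

variable {𝕜 E : Type*} [RCLike 𝕜] [NormedAddCommGroup E] [InnerProductSpace 𝕜 E]

theorem linearIndependent_pair_of_norm_inner_lt {x y : E} (h : ‖⟪x, y⟫_𝕜‖ < ‖x‖ * ‖y‖) :
    LinearIndependent 𝕜 ![x, y] := by
  have hx : x ≠ 0 := by rintro rfl; simp at h
  refine (LinearIndependent.pair_iff' hx).2 fun a hxy => h.ne ?_
  have hdep : x = 0 ∨ ∃ r : 𝕜, y = r • x := Or.inr ⟨a, hxy.symm⟩
  exact ((norm_inner_eq_norm_tfae 𝕜 x y).out 2 0).1 hdep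

theorem norm_eq_one_of_inner_self_eq_one {x : E} (hx : ⟪x, x⟫_𝕜 = 1) : ‖x‖ = 1 := by
  rw [inner_self_eq_norm_sq_to_K] at hx
  exact (pow_eq_one_iff_of_nonneg (norm_nonneg x) two_ne_zero).1 (by exact_mod_cast hx)

variable {v₁ v₂ : E} {p₁ p₂ : E →ₗ[𝕜] E}

theorem add_sub_anticomm_apply_left (hv₁ : ⟪v₁, v₁⟫_𝕜 = 1)
    (hp₁ : ∀ ψ, p₁ ψ = ⟪v₁, ψ⟫_𝕜 • v₁) (hp₂ : ∀ ψ, p₂ ψ = ⟪v₂, ψ⟫_𝕜 • v₂) :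
    (p₁ + p₂ - (p₁ * p₂ + p₂ * p₁)) v₁ = ((1 - ‖⟪v₁, v₂⟫_𝕜‖ ^ 2 : ℝ) : 𝕜) • v₁ := by
  have hN : ⟪v₂, v₁⟫_𝕜 * ⟪v₁, v₂⟫_𝕜 = (‖⟪v₁, v₂⟫_𝕜‖ ^ 2 : ℝ) := by
    rw [← inner_conj_symm, RCLike.conj_mul]; push_cast; rfl
  simp only [LinearMap.sub_apply, LinearMap.add_apply, Module.End.mul_apply, hp₁, hp₂,
    inner_smul_right, hv₁, one_smul, hN]
  push_cast
  module

theorem add_sub_anticomm_eq_smul_id (hdim : Module.finrank 𝕜 E = 2)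
    (hv₁ : ⟪v₁, v₁⟫_𝕜 = 1) (hv₂ : ⟪v₂, v₂⟫_𝕜 = 1) (hN : ‖⟪v₁, v₂⟫_𝕜‖ < 1)
    (hp₁ : ∀ ψ, p₁ ψ = ⟪v₁, ψ⟫_𝕜 • v₁) (hp₂ : ∀ ψ, p₂ ψ = ⟪v₂, ψ⟫_𝕜 • v₂) :
    p₁ + p₂ - (p₁ * p₂ + p₂ * p₁) = ((1 - ‖⟪v₁, v₂⟫_𝕜‖ ^ 2 : ℝ) : 𝕜) • LinearMap.id := by
  have hli : LinearIndependent 𝕜 ![v₁, v₂] := linearIndependent_pair_of_norm_inner_lt <| by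
    rwa [norm_eq_one_of_inner_self_eq_one hv₁, norm_eq_one_of_inner_self_eq_one hv₂, one_mul]
  let b := basisOfLinearIndependentOfCardEqFinrank hli (by simp [hdim])
  refine b.ext fun i => ?_
  fin_cases i
  · simpa [b] using add_sub_anticomm_apply_left hv₁ hp₁ hp₂
  · have hswap : p₂ + p₁ - (p₂ * p₁ + p₁ * p₂) = p₁ + p₂ - (p₁ * p₂ + p₂ * p₁) := by abel
    simpa [b, hswap, norm_inner_symm v₂] using add_sub_anticomm_apply_left hv₂ hp₂ hp₁

end

/-- Two-state projected probability operators sum to the identity: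
`(p₁)_{{1,2}} + (p₂)_{{1,2}} = I`. -/
theorem stmt_14 {V : Type*} [NormedAddCommGroup V] [InnerProductSpace ℂ V]
    (hdim : Module.finrank ℂ V = 2)
    (v1 v2 : V) (hv1 : (inner ℂ v1 v1 : ℂ) = 1) (hv2 : (inner ℂ v2 v2 : ℂ) = 1)
    (N12 : ℂ) (hN : (inner ℂ v1 v2 : ℂ) = N12) (hN1 : ‖N12‖ < 1)
    (p1 p2 : V →ₗ[ℂ] V)
    (hp1 : ∀ ψ, p1 ψ = (inner ℂ v1 ψ : ℂ) • v1)
    (hp2 : ∀ ψ, p2 ψ = (inner ℂ v2 ψ : ℂ) • v2) :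
    (((1 - ‖N12‖ ^ 4 : ℝ) : ℂ))⁻¹ •
        (p1 + ((‖N12‖ ^ 2 : ℝ) : ℂ) • p2 -
          (((1 + ‖N12‖ ^ 2) / 2 : ℝ) : ℂ) • (p1 * p2 + p2 * p1)) +
      (((1 - ‖N12‖ ^ 4 : ℝ) : ℂ))⁻¹ •
        (p2 + ((‖N12‖ ^ 2 : ℝ) : ℂ) • p1 -
          (((1 + ‖N12‖ ^ 2) / 2 : ℝ) : ℂ) • (p2 * p1 + p1 * p2)) =
      LinearMap.id := by
  subst hN
  have hcompl := add_sub_anticomm_eq_smul_id hdim hv1 hv2 hN1 hp1 hp2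
  rw [RCLike.ofReal_eq_complex_ofReal] at hcompl
  set n := ‖inner ℂ v1 v2‖
  have hn : (1 - n ^ 4 : ℂ) ≠ 0 := by
    exact_mod_cast (sub_pos.2 (pow_lt_one₀ (norm_nonneg _) hN1 four_ne_zero)).ne'
  have hanticomm : p1 * p2 + p2 * p1 = p1 + p2 - ((1 - n ^ 2 : ℝ) : ℂ) • LinearMap.id := by
    rw [← hcompl]; abel
  rw [add_comm (p2 * p1), hanticomm]
  match_scalars <;> field_simp <;> ring
end
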